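/- The complex CP^2_10 is bistellar equivalent to Kühnel's 9-vertex complex CP^2_9: applying the fifteen listed bistellar moves (i)–(xv) to CP^2_10 yields a 9-vertex complex L, and the vertex map x_{11}↦1, x_{23}↦2, x_{24}↦3, x_{34}↦4, x_{22}↦5, x_{13}↦6, x_{14}↦7, x_{33}↦8, x_{12}↦9 is an isomorphism from L onto CP^2_9. -/

import Mathlib

open Finset

section Generic

variable {V : Type*}

/-- Faces of the simplicial complex generated by a set of facets. -/
def cFaces (X : Set (Finset V)) : Set (Finset V) :=
  {A | A.Nonempty ∧ ∃ F ∈ X, A ⊆ F}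

/-- Number of faces of dimension `k`. -/
noncomputable def fVec (X : Set (Finset V)) (k : ℕ) : ℕ :=
  Set.ncard {A | A ∈ cFaces X ∧ A.card = k + 1}

/-- Faces of the link of a simplex. -/
def lkFaces [DecidableEq V] (X : Set (Finset V)) (σ : Finset V) : Set (Finset V) :=
  {τ | τ.Nonempty ∧ Disjoint τ σ ∧ τ ∪ σ ∈ cFaces X}

/-- Degree of a simplex: number of vertices of its link. -/
noncomputable def degS [DecidableEq V] (X : Set (Finset V)) (σ : Finset V) : ℕ :=
  Set.ncard {v : V | v ∉ σ ∧ insert v σ ∈ cFaces X}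

def TwoNeighbourly [DecidableEq V] (X : Set (Finset V)) : Prop :=
  ∀ u v : V, {u} ∈ cFaces X → {v} ∈ cFaces X → u ≠ v → ({u, v} : Finset V) ∈ cFaces X

/-- Geometric realization of the complex with facet set `X`. -/
def realization [Fintype V] (X : Set (Finset V)) : Set (V → ℝ) :=
  {f | (∀ v, 0 ≤ f v) ∧ (∑ v, f v) = 1 ∧ ∃ F ∈ X, ∀ v, f v ≠ 0 → v ∈ F}

/-- `X` triangulates the `d`-sphere. -/
def TriangulatesSphere [Fintype V] (X : Set (Finset V)) (d : ℕ) : Prop :=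
  Nonempty ((realization X) ≃ₜ (Metric.sphere (0 : EuclideanSpace ℝ (Fin (d + 1))) 1))

/-- The edge graph of a simplicial complex. -/
def cGraph [DecidableEq V] (X : Set (Finset V)) : SimpleGraph V where
  Adj u v := u ≠ v ∧ ({u, v} : Finset V) ∈ cFaces X
  symm := by
    refine ⟨?_⟩
    intro u v h
    exact ⟨h.1.symm, by rw [Finset.pair_comm]; exact h.2⟩
  loopless := ⟨fun v h => h.1 rfl⟩

/-- The subgroup of all vertex permutations which fix `S` pointwise and
map faces to faces. -/
def autRel [DecidableEq V] (X : Set (Finset V)) (S : Set V) : Subgroup (Equiv.Perm V) where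
  carrier := {π | (∀ v ∈ S, π v = v) ∧ ∀ F : Finset V, F ∈ X ↔ F.image π ∈ X}
  one_mem' := by
    refine ⟨fun v _ => rfl, fun F => ?_⟩
    simp
  mul_mem' := by
    rintro a b ⟨ha1, ha2⟩ ⟨hb1, hb2⟩
    refine ⟨fun v hv => ?_, fun F => ?_⟩
    · show a (b v) = v
      rw [hb1 v hv, ha1 v hv]
    · have h : F.image ⇑(a * b) = (F.image ⇑b).image ⇑a := by
        rw [Finset.image_image]; rfl
      rw [h]
      exact (hb2 F).trans (ha2 (F.image ⇑b))
  inv_mem' := by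
    rintro a ⟨ha1, ha2⟩
    refine ⟨fun v hv => ?_, fun F => ?_⟩
    · have := ha1 v hv
      exact a.injective (by simpa using this.symm)
    · have h := ha2 (F.image ⇑a⁻¹)
      have e : (F.image ⇑a⁻¹).image ⇑a = F := by
        rw [Finset.image_image]
        refine Finset.ext fun x => ?_
        simp
      rw [e] at h
      exact h.symm

/-- An icosahedron: a 12-vertex simplicial 2-sphere all whose vertices have degree 5. -/
def IsIcosahedron [Fintype V] [DecidableEq V] (X : Set (Finset V)) : Prop :=
  Fintype.card V = 12 ∧ (∀ F ∈ X, F.card = 3) ∧ (∀ v : V, {v} ∈ cFaces X) ∧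
    (∀ v : V, degS X {v} = 5) ∧ TriangulatesSphere X 2

/-- Two icosahedra on the same vertex set are antimorphic if the identity map
exchanges distance one and distance two. -/
def Antimorphic [DecidableEq V] (X Y : Set (Finset V)) : Prop :=
  ∀ u v : V, u ≠ v →
    (((cGraph X).Adj u v ↔ (cGraph Y).dist u v = 2) ∧
      ((cGraph X).dist u v = 2 ↔ (cGraph Y).Adj u v))

end Generic

/-- The real projective plane, as the quotient of the 2-sphere by the antipodal map. -/
def antipodalSetoid : Setoid (Metric.sphere (0 : EuclideanSpace ℝ (Fin 3)) 1) where
  r x y := (x : EuclideanSpace ℝ (Fin 3)) = y ∨ (x : EuclideanSpace ℝ (Fin 3)) = -y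
  iseqv := by
    constructor
    · intro x; exact Or.inl rfl
    · rintro x y (h | h)
      · exact Or.inl h.symm
      · exact Or.inr (by rw [h, neg_neg])
    · rintro x y z (h1 | h1) (h2 | h2)
      · exact Or.inl (h1.trans h2)
      · exact Or.inr (by rw [h1, h2])
      · exact Or.inr (by rw [h1, h2])
      · exact Or.inl (by rw [h1, h2, neg_neg])

def RealProjectivePlane : Type := Quotient antipodalSetoid

noncomputable instance : TopologicalSpace RealProjectivePlane :=
  instTopologicalSpaceQuotient

abbrev V4 : Type := Fin 4 × Fin 4

def x (i j : Fin 4) : V4 := (i, j)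

/-- Action of a permutation of indices on `V4`, possibly composed with the flip. -/
def permV (σ : Equiv.Perm (Fin 4)) (s : Bool) : V4 → V4 :=
  fun p => if s then (σ p.2, σ p.1) else (σ p.1, σ p.2)

def basic16 : Set (Finset V4) :=
  {({x 0 0, x 1 1, x 2 2, x 0 1, x 0 2} : Finset V4),
   ({x 0 0, x 1 1, x 0 1, x 0 3, x 2 3} : Finset V4),
   ({x 0 0, x 1 1, x 0 3, x 1 3, x 2 3} : Finset V4),
   ({x 0 0, x 1 1, x 1 0, x 1 3, x 2 0} : Finset V4),
   ({x 0 0, x 1 1, x 1 3, x 2 0, x 2 3} : Finset V4)}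

/-- The facets of `(S² × S²)₁₆`. -/
def facets16 : Set (Finset V4) :=
  {F | ∃ σ : Equiv.Perm (Fin 4), Equiv.Perm.sign σ = 1 ∧
    ∃ s : Bool, ∃ B ∈ basic16, F = B.image (permV σ s)}

/-- Sorting an index pair: the quotient map identifying `x i j` with `x j i`. -/
def sortPair : V4 → V4 := fun p => if p.1 ≤ p.2 then p else (p.2, p.1)

def basic10 : Set (Finset V4) :=
  {({x 0 0, x 1 1, x 2 2, x 0 1, x 0 2} : Finset V4),
   ({x 0 0, x 1 1, x 0 1, x 0 3, x 2 3} : Finset V4),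
   ({x 0 0, x 1 1, x 0 3, x 1 3, x 2 3} : Finset V4),
   ({x 0 0, x 1 1, x 0 1, x 0 2, x 1 3} : Finset V4),
   ({x 0 0, x 1 1, x 0 2, x 1 3, x 2 3} : Finset V4)}

/-- The facets of `CP²₁₀`: the orbit of the five basic facets under `A₄` acting
on the indices (followed by sorting each index pair). -/
def facets10 : Set (Finset V4) :=
  {F | ∃ σ : Equiv.Perm (Fin 4), Equiv.Perm.sign σ = 1 ∧
    ∃ B ∈ basic10, F = B.image (fun p => sortPair (σ p.1, σ p.2))}

/-- The cyclic permutation sending each entry of the list to the next one. -/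
def cyc : List V4 → Equiv.Perm V4
  | a :: b :: rest => Equiv.swap a b * cyc (b :: rest)
  | _ => 1

def gPerm : Equiv.Perm V4 :=
  cyc [x 0 1, x 1 0, x 1 3, x 3 1, x 0 3, x 3 0, x 3 2, x 2 3, x 0 2, x 2 0, x 2 1, x 1 2]

def hPerm : Equiv.Perm V4 :=
  cyc [x 0 1, x 0 3, x 1 0, x 1 3, x 2 0] * cyc [x 0 2, x 3 1, x 3 2, x 2 1, x 2 3]

def G12 : Subgroup (Equiv.Perm V4) := Subgroup.closure {gPerm, hPerm}

def basic12A : Finset V4 := {x 0 1, x 0 3, x 1 0, x 1 3, x 2 0}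

def basic12B : Finset V4 := {x 0 1, x 0 2, x 0 3, x 1 0, x 2 0}

/-- The facets of `(S² × S²)₁₂`. -/
def facets12 : Set (Finset V4) :=
  {F | ∃ π ∈ G12, F = basic12A.image ⇑π ∨ F = basic12B.image ⇑π}


/-- The result of the bistellar move `A ↦ B`. -/
def bmove (X : Set (Finset V4)) (A B : Finset V4) : Set (Finset V4) :=
  {F | F ∈ X ∧ ¬ A ⊆ F} ∪ {F | ∃ a ∈ A, F = B ∪ A.erase a}

/-- `A ↦ B` is a valid bistellar move on `X`: `A` is a face, `B` is not, and
the link of `A` is the boundary complex of `B`. -/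
def IsBMove (X : Set (Finset V4)) (A B : Finset V4) : Prop :=
  A ∈ cFaces X ∧ B ∉ cFaces X ∧ lkFaces X A = {τ | τ.Nonempty ∧ τ ⊂ B}

def mA1 : Finset V4 := ({x 1 1, x 2 2, x 3 3} : Finset V4)
def mB1 : Finset V4 := ({x 1 2, x 1 3, x 2 3} : Finset V4)
def mA2 : Finset V4 := ({x 0 0, x 2 2, x 3 3} : Finset V4)
def mB2 : Finset V4 := ({x 0 2, x 0 3, x 2 3} : Finset V4)
def mA3 : Finset V4 := ({x 0 0, x 1 1, x 3 3} : Finset V4)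
def mB3 : Finset V4 := ({x 0 1, x 0 3, x 1 3} : Finset V4)
def mA4 : Finset V4 := ({x 0 3, x 2 2, x 3 3} : Finset V4)
def mB4 : Finset V4 := ({x 0 1, x 0 2, x 2 3} : Finset V4)
def mA5 : Finset V4 := ({x 1 1, x 2 3, x 3 3} : Finset V4)
def mB5 : Finset V4 := ({x 0 2, x 1 2, x 1 3} : Finset V4)
def mA6 : Finset V4 := ({x 1 2, x 2 2, x 3 3} : Finset V4)
def mB6 : Finset V4 := ({x 0 1, x 1 3, x 2 3} : Finset V4)
def mA7 : Finset V4 := ({x 0 1, x 1 1, x 3 3} : Finset V4)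
def mB7 : Finset V4 := ({x 0 2, x 0 3, x 1 3} : Finset V4)
def mA8 : Finset V4 := ({x 2 2, x 3 3} : Finset V4)
def mB8 : Finset V4 := ({x 0 1, x 0 2, x 1 3, x 2 3} : Finset V4)
def mA9 : Finset V4 := ({x 1 1, x 3 3} : Finset V4)
def mB9 : Finset V4 := ({x 0 2, x 0 3, x 1 2, x 1 3} : Finset V4)
def mA10 : Finset V4 := ({x 0 0, x 1 3, x 3 3} : Finset V4)
def mB10 : Finset V4 := ({x 0 1, x 0 3, x 1 2} : Finset V4)
def mA11 : Finset V4 := ({x 0 0, x 0 2, x 3 3} : Finset V4)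
def mB11 : Finset V4 := ({x 0 3, x 1 2, x 2 3} : Finset V4)
def mA12 : Finset V4 := ({x 0 0, x 3 3} : Finset V4)
def mB12 : Finset V4 := ({x 0 1, x 0 3, x 1 2, x 2 3} : Finset V4)
def mA13 : Finset V4 := ({x 3 3, x 0 3, x 1 3} : Finset V4)
def mB13 : Finset V4 := ({x 0 1, x 0 2, x 1 2} : Finset V4)
def mA14 : Finset V4 := ({x 3 3, x 0 3} : Finset V4)
def mB14 : Finset V4 := ({x 2 3, x 0 1, x 0 2, x 1 2} : Finset V4)
def mA15 : Finset V4 := ({x 3 3} : Finset V4)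
def mB15 : Finset V4 := ({x 1 3, x 2 3, x 0 1, x 0 2, x 1 2} : Finset V4)
noncomputable def K0 : Set (Finset V4) := facets10
noncomputable def K1 : Set (Finset V4) := bmove K0 mA1 mB1
noncomputable def K2 : Set (Finset V4) := bmove K1 mA2 mB2
noncomputable def K3 : Set (Finset V4) := bmove K2 mA3 mB3
noncomputable def K4 : Set (Finset V4) := bmove K3 mA4 mB4
noncomputable def K5 : Set (Finset V4) := bmove K4 mA5 mB5
noncomputable def K6 : Set (Finset V4) := bmove K5 mA6 mB6
noncomputable def K7 : Set (Finset V4) := bmove K6 mA7 mB7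
noncomputable def K8 : Set (Finset V4) := bmove K7 mA8 mB8
noncomputable def K9 : Set (Finset V4) := bmove K8 mA9 mB9
noncomputable def K10 : Set (Finset V4) := bmove K9 mA10 mB10
noncomputable def K11 : Set (Finset V4) := bmove K10 mA11 mB11
noncomputable def K12 : Set (Finset V4) := bmove K11 mA12 mB12
noncomputable def K13 : Set (Finset V4) := bmove K12 mA13 mB13
noncomputable def K14 : Set (Finset V4) := bmove K13 mA14 mB14
noncomputable def K15 : Set (Finset V4) := bmove K14 mA15 mB15


/-- The vertex relabelling `x₁₁ ↦ 1, x₂₃ ↦ 2, x₂₄ ↦ 3, x₃₄ ↦ 4, x₂₂ ↦ 5,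
x₁₃ ↦ 6, x₁₄ ↦ 7, x₃₃ ↦ 8, x₁₂ ↦ 9` (written 0-based). -/
def phi9 : V4 → Fin 9 := fun p =>
  if p = x 0 0 then 0 else if p = x 1 2 then 1 else if p = x 1 3 then 2 else
  if p = x 2 3 then 3 else if p = x 1 1 then 4 else if p = x 0 2 then 5 else
  if p = x 0 3 then 6 else if p = x 2 2 then 7 else if p = x 0 1 then 8 else 0

def cp29Facets : Set (Finset (Fin 9)) :=
  {({(0 : Fin 9), (1 : Fin 9), (2 : Fin 9), (6 : Fin 9), (7 : Fin 9)} : Finset (Fin 9)),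
   ({(0 : Fin 9), (1 : Fin 9), (2 : Fin 9), (6 : Fin 9), (8 : Fin 9)} : Finset (Fin 9)),
   ({(0 : Fin 9), (1 : Fin 9), (2 : Fin 9), (7 : Fin 9), (8 : Fin 9)} : Finset (Fin 9)),
   ({(0 : Fin 9), (1 : Fin 9), (3 : Fin 9), (4 : Fin 9), (5 : Fin 9)} : Finset (Fin 9)),
   ({(0 : Fin 9), (1 : Fin 9), (3 : Fin 9), (4 : Fin 9), (8 : Fin 9)} : Finset (Fin 9)),
   ({(0 : Fin 9), (1 : Fin 9), (3 : Fin 9), (5 : Fin 9), (6 : Fin 9)} : Finset (Fin 9)),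
   ({(0 : Fin 9), (1 : Fin 9), (3 : Fin 9), (6 : Fin 9), (8 : Fin 9)} : Finset (Fin 9)),
   ({(0 : Fin 9), (1 : Fin 9), (4 : Fin 9), (5 : Fin 9), (7 : Fin 9)} : Finset (Fin 9)),
   ({(0 : Fin 9), (1 : Fin 9), (4 : Fin 9), (7 : Fin 9), (8 : Fin 9)} : Finset (Fin 9)),
   ({(0 : Fin 9), (1 : Fin 9), (5 : Fin 9), (6 : Fin 9), (7 : Fin 9)} : Finset (Fin 9)),
   ({(0 : Fin 9), (2 : Fin 9), (3 : Fin 9), (4 : Fin 9), (5 : Fin 9)} : Finset (Fin 9)),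
   ({(0 : Fin 9), (2 : Fin 9), (3 : Fin 9), (4 : Fin 9), (6 : Fin 9)} : Finset (Fin 9)),
   ({(0 : Fin 9), (2 : Fin 9), (3 : Fin 9), (5 : Fin 9), (7 : Fin 9)} : Finset (Fin 9)),
   ({(0 : Fin 9), (2 : Fin 9), (3 : Fin 9), (6 : Fin 9), (7 : Fin 9)} : Finset (Fin 9)),
   ({(0 : Fin 9), (2 : Fin 9), (4 : Fin 9), (5 : Fin 9), (8 : Fin 9)} : Finset (Fin 9)),
   ({(0 : Fin 9), (2 : Fin 9), (4 : Fin 9), (6 : Fin 9), (8 : Fin 9)} : Finset (Fin 9)),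
   ({(0 : Fin 9), (2 : Fin 9), (5 : Fin 9), (7 : Fin 9), (8 : Fin 9)} : Finset (Fin 9)),
   ({(0 : Fin 9), (3 : Fin 9), (4 : Fin 9), (6 : Fin 9), (8 : Fin 9)} : Finset (Fin 9)),
   ({(0 : Fin 9), (3 : Fin 9), (5 : Fin 9), (6 : Fin 9), (7 : Fin 9)} : Finset (Fin 9)),
   ({(0 : Fin 9), (4 : Fin 9), (5 : Fin 9), (7 : Fin 9), (8 : Fin 9)} : Finset (Fin 9)),
   ({(1 : Fin 9), (2 : Fin 9), (3 : Fin 9), (4 : Fin 9), (5 : Fin 9)} : Finset (Fin 9)),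
   ({(1 : Fin 9), (2 : Fin 9), (3 : Fin 9), (4 : Fin 9), (7 : Fin 9)} : Finset (Fin 9)),
   ({(1 : Fin 9), (2 : Fin 9), (3 : Fin 9), (5 : Fin 9), (8 : Fin 9)} : Finset (Fin 9)),
   ({(1 : Fin 9), (2 : Fin 9), (3 : Fin 9), (7 : Fin 9), (8 : Fin 9)} : Finset (Fin 9)),
   ({(1 : Fin 9), (2 : Fin 9), (4 : Fin 9), (5 : Fin 9), (6 : Fin 9)} : Finset (Fin 9)),
   ({(1 : Fin 9), (2 : Fin 9), (4 : Fin 9), (6 : Fin 9), (7 : Fin 9)} : Finset (Fin 9)),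
   ({(1 : Fin 9), (2 : Fin 9), (5 : Fin 9), (6 : Fin 9), (8 : Fin 9)} : Finset (Fin 9)),
   ({(1 : Fin 9), (3 : Fin 9), (4 : Fin 9), (7 : Fin 9), (8 : Fin 9)} : Finset (Fin 9)),
   ({(1 : Fin 9), (3 : Fin 9), (5 : Fin 9), (6 : Fin 9), (8 : Fin 9)} : Finset (Fin 9)),
   ({(1 : Fin 9), (4 : Fin 9), (5 : Fin 9), (6 : Fin 9), (7 : Fin 9)} : Finset (Fin 9)),
   ({(2 : Fin 9), (3 : Fin 9), (4 : Fin 9), (6 : Fin 9), (7 : Fin 9)} : Finset (Fin 9)),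
   ({(2 : Fin 9), (3 : Fin 9), (5 : Fin 9), (7 : Fin 9), (8 : Fin 9)} : Finset (Fin 9)),
   ({(2 : Fin 9), (4 : Fin 9), (5 : Fin 9), (6 : Fin 9), (8 : Fin 9)} : Finset (Fin 9)),
   ({(3 : Fin 9), (4 : Fin 9), (6 : Fin 9), (7 : Fin 9), (8 : Fin 9)} : Finset (Fin 9)),
   ({(3 : Fin 9), (5 : Fin 9), (6 : Fin 9), (7 : Fin 9), (8 : Fin 9)} : Finset (Fin 9)),
   ({(4 : Fin 9), (5 : Fin 9), (6 : Fin 9), (7 : Fin 9), (8 : Fin 9)} : Finset (Fin 9))}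

/-! Every complex in the chain is finite, hence the coercion of an explicit finset of facets, and
for finite complexes faces, links, boundaries of simplices and vertex sets are computable finsets.
So the validity of the fifteen moves and the comparison of the relabelled `K15` with Kühnel's facet
list reduce to a finite computation checked by the kernel. -/

section FiniteComplex

variable {V : Type*}

lemma mem_cFaces_coe (S : Finset (Finset V)) (A : Finset V) :
    A ∈ cFaces (S : Set (Finset V)) ↔ A.Nonempty ∧ ∃ F ∈ S, A ⊆ F := Iff.rfl

lemma setOf_eq_image_coe {W : Type*} [DecidableEq W] (S : Finset (Finset V)) (f : V → W) :
    {F | ∃ G ∈ (S : Set (Finset V)), F = G.image f} = ↑(S.image (Finset.image f)) := by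
  ext F
  simp [eq_comm]

variable [DecidableEq V]

lemma setOf_singleton_mem_cFaces_coe (S : Finset (Finset V)) :
    {v : V | {v} ∈ cFaces (S : Set (Finset V))} = ↑(S.biUnion id) := by
  ext v
  simp [mem_cFaces_coe]

def linkFinset (S : Finset (Finset V)) (A : Finset V) : Finset (Finset V) :=
  ((S.filter (A ⊆ ·)).biUnion fun F => (F \ A).powerset).filter Finset.Nonempty

def boundaryFinset (B : Finset V) : Finset (Finset V) :=
  B.ssubsets.filter Finset.Nonempty

lemma lkFaces_coe (S : Finset (Finset V)) (A : Finset V) :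
    lkFaces (S : Set (Finset V)) A = ↑(linkFinset S A) := by
  ext τ
  simp only [lkFaces, linkFinset, Set.mem_ofPred_eq, mem_cFaces_coe, coe_filter, mem_biUnion,
    mem_filter, mem_powerset, subset_sdiff, union_subset_iff]
  constructor
  · rintro ⟨hne, hdisj, -, F, hF, hτF, hAF⟩
    exact ⟨⟨F, ⟨hF, hAF⟩, hτF, hdisj⟩, hne⟩
  · rintro ⟨⟨F, ⟨hF, hAF⟩, hτF, hdisj⟩, hne⟩
    exact ⟨hne, hdisj, hne.mono subset_union_left, F, hF, hτF, hAF⟩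

lemma setOf_nonempty_ssubset_eq_coe (B : Finset V) :
    {τ : Finset V | τ.Nonempty ∧ τ ⊂ B} = ↑(boundaryFinset B) := by
  ext τ
  simp [boundaryFinset, and_comm]

end FiniteComplex

def bmoveFinset (S : Finset (Finset V4)) (A B : Finset V4) : Finset (Finset V4) :=
  S.filter (¬ A ⊆ ·) ∪ A.image fun a => B ∪ A.erase a

lemma bmove_coe (S : Finset (Finset V4)) (A B : Finset V4) :
    bmove S A B = ↑(bmoveFinset S A B) := by
  ext F
  simp [bmove, bmoveFinset, eq_comm]

lemma isBMove_coe_iff (S : Finset (Finset V4)) (A B : Finset V4) :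
    IsBMove S A B ↔ (A.Nonempty ∧ ∃ F ∈ S, A ⊆ F) ∧ ¬ (B.Nonempty ∧ ∃ F ∈ S, B ⊆ F) ∧
      linkFinset S A = boundaryFinset B := by
  rw [IsBMove, mem_cFaces_coe, mem_cFaces_coe, lkFaces_coe, setOf_nonempty_ssubset_eq_coe,
    coe_inj]

def basic10Finset : Finset (Finset V4) :=
  {{x 0 0, x 1 1, x 2 2, x 0 1, x 0 2}, {x 0 0, x 1 1, x 0 1, x 0 3, x 2 3},
   {x 0 0, x 1 1, x 0 3, x 1 3, x 2 3}, {x 0 0, x 1 1, x 0 1, x 0 2, x 1 3},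
   {x 0 0, x 1 1, x 0 2, x 1 3, x 2 3}}

def facets10Finset : Finset (Finset V4) :=
  (univ.filter fun σ : Equiv.Perm (Fin 4) => σ.sign = 1).biUnion fun σ =>
    basic10Finset.image fun B => B.image fun p => sortPair (σ p.1, σ p.2)

lemma facets10_eq_coe : facets10 = ↑facets10Finset := by
  have hbasic : basic10 = ↑basic10Finset := by
    simp only [basic10, basic10Finset, coe_insert, coe_singleton]
  ext F
  simp [facets10, facets10Finset, hbasic, eq_comm]

set_option maxRecDepth 10000 in
/-- the fifteen listed bistellar moves are valid, they transform
`CP²₁₀` into a 9-vertex complex `L = K15`, and `phi9` is an isomorphism from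
`L` onto Kühnel's `CP²₉`. -/
theorem stmt_13 :
    IsBMove K0 mA1 mB1 ∧ IsBMove K1 mA2 mB2 ∧ IsBMove K2 mA3 mB3 ∧
    IsBMove K3 mA4 mB4 ∧ IsBMove K4 mA5 mB5 ∧ IsBMove K5 mA6 mB6 ∧
    IsBMove K6 mA7 mB7 ∧ IsBMove K7 mA8 mB8 ∧ IsBMove K8 mA9 mB9 ∧
    IsBMove K9 mA10 mB10 ∧ IsBMove K10 mA11 mB11 ∧ IsBMove K11 mA12 mB12 ∧
    IsBMove K12 mA13 mB13 ∧ IsBMove K13 mA14 mB14 ∧ IsBMove K14 mA15 mB15 ∧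
    Set.ncard {v : V4 | {v} ∈ cFaces K15} = 9 ∧
    Set.InjOn phi9 {v : V4 | {v} ∈ cFaces K15} ∧
    {F | ∃ G ∈ K15, F = G.image phi9} = cp29Facets := by
  simp only [K15, K14, K13, K12, K11, K10, K9, K8, K7, K6, K5, K4, K3, K2, K1, K0,
    facets10_eq_coe, bmove_coe]
  simp only [isBMove_coe_iff, setOf_singleton_mem_cFaces_coe, Set.ncard_coe_finset,
    ← card_image_iff, setOf_eq_image_coe, cp29Facets, ← coe_insert, ← coe_singleton, coe_inj]
  repeat' apply And.intro
  all_goals decide
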